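/- Let G ∈ ℝ^{n×n} be symmetric negative definite, D ∈ ℝ^{n×n} symmetric positive definite, and F ∈ ℝ^{n×n} with −FᵗG⁻¹F − D⁻¹ ⪰ 0 (positive semidefinite). Then F is invertible and G + F D Fᵗ ⪰ 0. -/

import Mathlib

/-!
Put `A := Fᵀ (-G)⁻¹ F = -Fᵀ G⁻¹ F`. The hypothesis says `A ⪰ D⁻¹ ≻ 0`, so `A` is positive definite
and hence `F` is invertible. Inversion is antitone in the Loewner order, so `D ⪰ A⁻¹`, and
conjugating by `F` gives `F D Fᵀ ⪰ F A⁻¹ Fᵀ = -G`.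
-/

open Matrix

namespace Matrix

variable {n : Type*} [Fintype n] [DecidableEq n]

theorem inv_neg {α : Type*} [CommRing α] (A : Matrix n n α) : (-A)⁻¹ = -A⁻¹ := by
  by_cases hA : IsUnit A.det
  · exact inv_eq_left_inv (by simp [nonsing_inv_mul A hA])
  · have hnA : ¬IsUnit (-A).det := by
      rwa [det_neg, IsUnit.mul_iff, and_iff_right (isUnit_neg_one.pow _)]
    rw [nonsing_inv_apply_not_isUnit _ hA, nonsing_inv_apply_not_isUnit _ hnA, neg_zero]

theorem mul_inv_mul_mul_mul_eq_inv {α : Type*} [CommRing α] {A B : Matrix n n α}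
    (hA : IsUnit A.det) (hB : IsUnit B.det) (M : Matrix n n α) :
    A * (B * M * A)⁻¹ * B = M⁻¹ := by
  rw [mul_inv_rev, mul_inv_rev, ← mul_assoc, ← mul_assoc, mul_nonsing_inv A hA, one_mul,
    mul_assoc, nonsing_inv_mul B hB, mul_one]

variable {K : Type*} [Field K] [PartialOrder K] [StarRing K]

theorem isUnit_det_of_posDef_conjTranspose_mul_mul {M F : Matrix n n K}
    (h : (Fᴴ * M * F).PosDef) : IsUnit F.det := by
  rw [← isUnit_iff_isUnit_det]
  exact isUnit_of_mul_isUnit_right h.isUnit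

/-- The Schur complements of `fromBlocks A 1 1 B⁻¹` are `A - B` and `B⁻¹ - A⁻¹`. -/
theorem PosDef.posSemidef_inv_sub_inv [StarOrderedRing K] {A B : Matrix n n K} (hB : B.PosDef)
    (hAB : (A - B).PosSemidef) : (B⁻¹ - A⁻¹).PosSemidef := by
  have hA : A.PosDef := by simpa using hB.add_posSemidef hAB
  have hBinv : B⁻¹.PosDef := hB.inv
  let := hA.isUnit.invertible
  let := hBinv.isUnit.invertible
  have hblock : (fromBlocks A 1 (1 : Matrix n n K)ᴴ B⁻¹).PosSemidef := by
    rw [PosDef.fromBlocks₂₂ _ _ hBinv]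
    simpa [nonsing_inv_nonsing_inv B ((isUnit_iff_isUnit_det _).mp hB.isUnit)] using hAB
  simpa using (PosDef.fromBlocks₁₁ _ _ hA).mp hblock

end Matrix

theorem stmt_15 {n : ℕ} (G D F : Matrix (Fin n) (Fin n) ℝ)
    (hG : (-G).PosDef) (hD : D.PosDef)
    (h : (-(Fᵀ * G⁻¹ * F) - D⁻¹).PosSemidef) :
    IsUnit F.det ∧ (G + F * D * Fᵀ).PosSemidef := by
  have hA_eq : -(Fᵀ * G⁻¹ * F) = Fᴴ * (-G)⁻¹ * F := by
    rw [Matrix.inv_neg, conjTranspose_eq_transpose_of_trivial, Matrix.mul_neg, Matrix.neg_mul]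
  rw [hA_eq] at h
  have hA : (Fᴴ * (-G)⁻¹ * F).PosDef := by simpa using hD.inv.add_posSemidef h
  have hF : IsUnit F.det := isUnit_det_of_posDef_conjTranspose_mul_mul hA
  refine ⟨hF, ?_⟩
  have hDA : (D - (Fᴴ * (-G)⁻¹ * F)⁻¹).PosSemidef := by
    simpa [nonsing_inv_nonsing_inv D ((isUnit_iff_isUnit_det _).mp hD.isUnit)]
      using hD.inv.posSemidef_inv_sub_inv h
  have hconj := hDA.mul_mul_conjTranspose_same F
  rwa [Matrix.mul_sub, Matrix.sub_mul,
    mul_inv_mul_mul_mul_eq_inv hF (by rw [det_conjTranspose]; exact hF.star),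
    nonsing_inv_nonsing_inv _ ((isUnit_iff_isUnit_det _).mp hG.isUnit),
    conjTranspose_eq_transpose_of_trivial, sub_neg_eq_add, add_comm] at hconj
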